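/- Let Ω ⊆ ℝⁿ be open and nonempty, h : Ω → ℝ continuous, and ρ : ℝⁿ → [0, ∞) an integrable probability density whose support is Ω. For r > 0 define φ_{rh}(x) := sup_{k ∈ ℝⁿ} (⟨x, k⟩ − log ∫_Ω ρ(y) exp(⟨k, y⟩ − r h(y)) dy). Then for every x in the convex hull ⟨Ω⟩, lim_{r → ∞} (1/r) φ_{rh}(x) = conv_Ω(h)(x), as an equality in ℝ ∪ {−∞}; moreover conv_Ω(h) is either identically −∞ on ⟨Ω⟩ or real-valued and continuous on ⟨Ω⟩. -/
import Mathlib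


open MeasureTheory Filter
open scoped RealInnerProductSpace ENNReal Topology

/-- The lower convex envelope of `f` relative to `Ω`, with values in `ℝ ∪ {−∞}` (`EReal`). -/
noncomputable def convEnv {n : ℕ} (Ω : Set (EuclideanSpace ℝ (Fin n)))
    (f : EuclideanSpace ℝ (Fin n) → ℝ) (x : EuclideanSpace ℝ (Fin n)) : EReal :=
  sSup {z : EReal | ∃ (a : ℝ) (b : EuclideanSpace ℝ (Fin n)),
    (∀ y ∈ Ω, a + ⟪b, y⟫ ≤ f y) ∧ z = ((a + ⟪b, x⟫ : ℝ) : EReal)}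

/-- The tilted log-moment-generating function, with values in `EReal`. -/
noncomputable def psiTilt {n : ℕ} (Ω : Set (EuclideanSpace ℝ (Fin n)))
    (ρ h : EuclideanSpace ℝ (Fin n) → ℝ) (k : EuclideanSpace ℝ (Fin n)) : EReal :=
  ENNReal.log (∫⁻ y in Ω, ENNReal.ofReal (ρ y * Real.exp (⟪k, y⟫ - h y)))

/-- The Legendre transform `φ_h(x) = sup_k (⟨x,k⟫ − ψ_h(k))`, with values in `EReal`. -/
noncomputable def phiTilt {n : ℕ} (Ω : Set (EuclideanSpace ℝ (Fin n)))
    (ρ h : EuclideanSpace ℝ (Fin n) → ℝ) (x : EuclideanSpace ℝ (Fin n)) : EReal :=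
  ⨆ k : EuclideanSpace ℝ (Fin n), ((⟪x, k⟫ : ℝ) : EReal) - psiTilt Ω ρ h k

variable {n : ℕ}
local notation "E" => EuclideanSpace ℝ (Fin n)

/-- total mass of ρ on Ω is 1 -/
lemma aux_nu_one (Ω : Set E) (hΩm : MeasurableSet Ω)
    (ρ : E → ℝ) (hρ0 : ∀ y, 0 ≤ ρ y) (hρint : Integrable ρ) (hρ1 : (∫ y, ρ y) = 1)
    (hρsupp : ∀ᵐ y, (y ∈ Ω → 0 < ρ y) ∧ (y ∉ Ω → ρ y = 0)) :
    (∫⁻ y in Ω, ENNReal.ofReal (ρ y)) = 1 := by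
  have h2 : (fun y => ENNReal.ofReal (ρ y)) =ᵐ[(volume : Measure E)]
      Ω.indicator (fun y => ENNReal.ofReal (ρ y)) := by
    filter_upwards [hρsupp] with y hy
    by_cases hyΩ : y ∈ Ω
    · simp [Set.indicator_of_mem hyΩ]
    · simp [Set.indicator_of_notMem hyΩ, hy.2 hyΩ]
  have h3 : (∫⁻ y in Ω, ENNReal.ofReal (ρ y)) = ∫⁻ y, ENNReal.ofReal (ρ y) := by
    rw [← lintegral_indicator hΩm, lintegral_congr_ae h2.symm]
  rw [h3, ← ofReal_integral_eq_lintegral_ofReal hρint (ae_of_all _ hρ0), hρ1]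
  simp

/-- lower bound for ψ from a subset with mass and pointwise bound -/
lemma aux_psi_ge (Ω : Set E) (ρ : E → ℝ) (hρ0 : ∀ y, 0 ≤ ρ y) (H : E → ℝ) (k : E)
    (A : Set E) (hAm : MeasurableSet A) (hA : A ⊆ Ω) (β m : ℝ) (hm : 0 < m)
    (hmass : ENNReal.ofReal m ≤ ∫⁻ y in A, ENNReal.ofReal (ρ y))
    (hpt : ∀ y ∈ A, β ≤ ⟪k, y⟫ - H y) :
    ((β + Real.log m : ℝ) : EReal) ≤ psiTilt Ω ρ H k := by
  have h1 : (∫⁻ y in A, ENNReal.ofReal (ρ y * Real.exp β))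
      ≤ ∫⁻ y in A, ENNReal.ofReal (ρ y * Real.exp (⟪k, y⟫ - H y)) := by
    refine lintegral_mono_ae ((ae_restrict_iff' hAm).2 (ae_of_all _ fun y hy => ?_))
    exact ENNReal.ofReal_le_ofReal
      (mul_le_mul_of_nonneg_left (Real.exp_le_exp.2 (hpt y hy)) (hρ0 y))
  have h2 : (∫⁻ y in A, ENNReal.ofReal (ρ y * Real.exp β))
      = ENNReal.ofReal (Real.exp β) * ∫⁻ y in A, ENNReal.ofReal (ρ y) := by
    rw [← lintegral_const_mul' _ _ ENNReal.ofReal_ne_top]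
    congr 1
    funext y
    rw [← ENNReal.ofReal_mul (Real.exp_pos β).le, mul_comm]
  have h3 : ENNReal.ofReal (Real.exp β * m)
      ≤ ∫⁻ y in Ω, ENNReal.ofReal (ρ y * Real.exp (⟪k, y⟫ - H y)) := by
    calc ENNReal.ofReal (Real.exp β * m)
        = ENNReal.ofReal (Real.exp β) * ENNReal.ofReal m := ENNReal.ofReal_mul (Real.exp_pos β).le
      _ ≤ ENNReal.ofReal (Real.exp β) * ∫⁻ y in A, ENNReal.ofReal (ρ y) := by
          exact mul_le_mul_right hmass _
      _ = ∫⁻ y in A, ENNReal.ofReal (ρ y * Real.exp β) := h2.symm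
      _ ≤ ∫⁻ y in A, ENNReal.ofReal (ρ y * Real.exp (⟪k, y⟫ - H y)) := h1
      _ ≤ ∫⁻ y in Ω, ENNReal.ofReal (ρ y * Real.exp (⟪k, y⟫ - H y)) := lintegral_mono_set hA
  have h4 := ENNReal.log_monotone h3
  rwa [ENNReal.log_ofReal_of_pos (mul_pos (Real.exp_pos β) hm), Real.log_mul
    (Real.exp_pos β).ne' hm.ne', Real.log_exp] at h4

/-- positivity of mass of a ball inside Ω -/
lemma aux_mass_pos (Ω : Set E) (ρ : E → ℝ) (hρint : Integrable ρ)
    (hρsupp : ∀ᵐ y, (y ∈ Ω → 0 < ρ y) ∧ (y ∉ Ω → ρ y = 0))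
    (c : E) (ε : ℝ) (hε : 0 < ε) (hB : Metric.ball c ε ⊆ Ω) :
    0 < ∫⁻ y in Metric.ball c ε, ENNReal.ofReal (ρ y) := by
  rw [pos_iff_ne_zero]
  intro h0
  have haem : AEMeasurable (fun y => ENNReal.ofReal (ρ y))
      ((volume : Measure E).restrict (Metric.ball c ε)) :=
    (hρint.aemeasurable.restrict).ennreal_ofReal
  have h0' : (fun y => ENNReal.ofReal (ρ y)) =ᵐ[(volume : Measure E).restrict (Metric.ball c ε)] 0 :=
    (lintegral_eq_zero_iff' haem).1 h0
  have hsupp' : ∀ᵐ y ∂((volume : Measure E).restrict (Metric.ball c ε)), y ∈ Ω → 0 < ρ y :=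
    ae_restrict_of_ae (hρsupp.mono fun y hy => hy.1)
  have hmem : ∀ᵐ y ∂((volume : Measure E).restrict (Metric.ball c ε)), y ∈ Metric.ball c ε :=
    ae_restrict_mem measurableSet_ball
  have hbad : ∀ᵐ y ∂((volume : Measure E).restrict (Metric.ball c ε)), False := by
    filter_upwards [h0', hsupp', hmem] with y h1 h2 h3
    have := h2 (hB h3)
    simp only [Pi.zero_apply, ENNReal.ofReal_eq_zero] at h1
    linarith
  have hne : ((volume : Measure E).restrict (Metric.ball c ε)) ≠ 0 := by
    intro hz
    have := Measure.restrict_eq_zero.1 hz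
    exact (Metric.measure_ball_pos volume c hε).ne' this
  have hz : ((volume : Measure E).restrict (Metric.ball c ε)) Set.univ = 0 := by
    rw [ae_iff] at hbad
    simpa using hbad
  exact hne (Measure.measure_univ_eq_zero.1 hz)

lemma aux_isOpen_convexHull (Ω : Set E) (hΩo : IsOpen Ω) : IsOpen (convexHull ℝ Ω) := by
  rw [Metric.isOpen_iff]
  intro x hx
  rw [convexHull_eq] at hx
  obtain ⟨ι, t, w, z, hw0, hw1, hz, hcm⟩ := hx
  have htne : t.Nonempty := Finset.nonempty_of_sum_ne_zero (by rw [hw1]; norm_num)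
  have hδ : ∀ i ∈ t, ∃ δ > 0, Metric.ball (z i) δ ⊆ Ω := by
    intro i hi
    exact Metric.isOpen_iff.1 hΩo (z i) (hz i hi)
  choose! δ hδ0 hδΩ using hδ
  refine ⟨t.inf' htne δ, ?_, ?_⟩
  · simp only [gt_iff_lt, Finset.lt_inf'_iff]
    exact hδ0
  · intro v hv
    have hx_eq : x = ∑ i ∈ t, w i • z i := by
      rw [← hcm, Finset.centerMass_eq_of_sum_1 _ _ hw1]
    have hv_eq : v = ∑ i ∈ t, w i • (z i + (v - x)) := by
      simp only [smul_add]
      rw [Finset.sum_add_distrib]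
      simp only [← Finset.sum_smul, hw1, one_smul]
      rw [← hx_eq]
      abel
    have : ∀ i ∈ t, z i + (v - x) ∈ Ω := by
      intro i hi
      apply hδΩ i hi
      rw [Metric.mem_ball, dist_eq_norm]
      have heq : z i + (v - x) - z i = v - x := by abel
      rw [heq]
      calc ‖v - x‖ = dist v x := (dist_eq_norm v x).symm
        _ < t.inf' htne δ := hv
        _ ≤ δ i := Finset.inf'_le _ hi
    rw [hv_eq, ← Finset.centerMass_eq_of_sum_1 _ _ hw1]
    exact Finset.centerMass_mem_convexHull _ hw0 (by rw [hw1]; norm_num) this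

lemma aux_inner_le_max (t : Finset E) (htne : t.Nonempty) (x : E)
    (hx : x ∈ convexHull ℝ (↑t : Set E)) (k : E) :
    ∃ f ∈ t, ⟪x, k⟫ ≤ ⟪f, k⟫ := by
  obtain ⟨f, hf, hfmax⟩ := t.exists_mem_eq_sup' htne (fun f => ⟪f, k⟫)
  refine ⟨f, hf, ?_⟩
  have hlin : IsLinearMap ℝ (fun y : E => ⟪y, k⟫) :=
    ⟨fun a b => inner_add_left a b k, fun c a => real_inner_smul_left a k c⟩
  have hconv : Convex ℝ {y : E | ⟪y, k⟫ ≤ t.sup' htne (fun f => ⟪f, k⟫)} :=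
    convex_halfSpace_le hlin _
  have hsub : (↑t : Set E) ⊆ {y : E | ⟪y, k⟫ ≤ t.sup' htne (fun f => ⟪f, k⟫)} := by
    intro y hy
    exact Finset.le_sup' (fun f : EuclideanSpace ℝ (Fin n) => ⟪f, k⟫) (by exact_mod_cast hy)
  have hx' : ⟪x, k⟫ ≤ t.sup' htne (fun f => ⟪f, k⟫) := convexHull_min hsub hconv hx
  rwa [hfmax] at hx'

lemma aux_coe_sSup (S : Set ℝ) (hne : S.Nonempty) (hbdd : BddAbove S) :
    sSup ((fun t : ℝ => (t : EReal)) '' S) = ((sSup S : ℝ) : EReal) := by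
  refine (Monotone.map_csSup_of_continuousAt ?_ ?_ hne hbdd).symm
  · exact continuous_coe_real_ereal.continuousAt
  · exact fun a b hab => EReal.coe_le_coe_iff.2 hab

lemma aux_phi_ge (Ω : Set E) (hΩm : MeasurableSet Ω)
    (ρ : E → ℝ) (hρ0 : ∀ y, 0 ≤ ρ y) (hν1 : (∫⁻ y in Ω, ENNReal.ofReal (ρ y)) = 1)
    (h : E → ℝ) (a : ℝ) (b : E) (hab : ∀ y ∈ Ω, a + ⟪b, y⟫ ≤ h y)
    (x : E) (r : ℝ) (hr : 0 < r) :
    ((r * (a + ⟪b, x⟫) : ℝ) : EReal) ≤ phiTilt Ω ρ (fun y => r * h y) x := by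
  have hψ : psiTilt Ω ρ (fun y => r * h y) (r • b) ≤ ((-(r * a) : ℝ) : EReal) := by
    have h1 : (∫⁻ y in Ω, ENNReal.ofReal (ρ y * Real.exp (⟪r • b, y⟫ - r * h y)))
        ≤ ∫⁻ y in Ω, ENNReal.ofReal (ρ y * Real.exp (-(r * a))) := by
      refine lintegral_mono_ae ((ae_restrict_iff' hΩm).2 (ae_of_all _ fun y hy => ?_))
      refine ENNReal.ofReal_le_ofReal (mul_le_mul_of_nonneg_left ?_ (hρ0 y))
      refine Real.exp_le_exp.2 ?_
      have := hab y hy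
      rw [real_inner_smul_left]
      nlinarith
    have h2 : (∫⁻ y in Ω, ENNReal.ofReal (ρ y * Real.exp (-(r * a))))
        = ENNReal.ofReal (Real.exp (-(r * a))) := by
      have hpt : ∀ y : E, ENNReal.ofReal (ρ y * Real.exp (-(r * a)))
          = ENNReal.ofReal (Real.exp (-(r * a))) * ENNReal.ofReal (ρ y) := by
        intro y
        rw [← ENNReal.ofReal_mul (Real.exp_pos _).le, mul_comm]
      simp_rw [hpt]
      rw [lintegral_const_mul' _ _ ENNReal.ofReal_ne_top, hν1, mul_one]
    have h3 := ENNReal.log_monotone (h2 ▸ h1)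
    rwa [ENNReal.log_ofReal_of_pos (Real.exp_pos _), Real.log_exp] at h3
  refine le_trans ?_ (le_iSup (fun k => ((⟪x, k⟫ : ℝ) : EReal) - psiTilt Ω ρ (fun y => r * h y) k) (r • b))
  have hle : ((r * (a + ⟪b, x⟫) : ℝ) : EReal)
      ≤ ((⟪x, r • b⟫ : ℝ) : EReal) - ((-(r * a) : ℝ) : EReal) := by
    rw [← EReal.coe_sub]
    apply EReal.coe_le_coe_iff.2
    rw [real_inner_smul_right, real_inner_comm x b]
    ring_nf
    exact le_refl _
  exact hle.trans (EReal.sub_le_sub le_rfl hψ)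
lemma aux_local (Ω : Set E) (hΩo : IsOpen Ω)
    (h : E → ℝ) (hh : ContinuousOn h Ω)
    (ρ : E → ℝ) (hρ0 : ∀ y, 0 ≤ ρ y) (hρint : Integrable ρ)
    (hρsupp : ∀ᵐ y, (y ∈ Ω → 0 < ρ y) ∧ (y ∉ Ω → ρ y = 0))
    (hν1 : (∫⁻ y in Ω, ENNReal.ofReal (ρ y)) = 1)
    (x : E) (c R : ℝ) (hR : 0 < R)
    (hc : convEnv Ω h x < ((c : ℝ) : EReal)) (ℓ₀ : E) :
    ∃ ρ₀ > 0, ∃ r₂ : ℝ, 1 ≤ r₂ ∧ ∀ r, r₂ ≤ r → ∀ ℓ : E, dist ℓ ℓ₀ < ρ₀ → ‖ℓ‖ ≤ R →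
      ((⟪x, r • ℓ⟫ : ℝ) : EReal) - psiTilt Ω ρ (fun y => r * h y) (r • ℓ)
        ≤ ((r * c : ℝ) : EReal) := by
  -- find a good point y₀
  have hy₀ : ∃ y₀ ∈ Ω, ⟪x, ℓ₀⟫ - ⟪y₀, ℓ₀⟫ + h y₀ < c := by
    by_contra hcon
    push_neg at hcon
    have hmin : ∀ y ∈ Ω, (c - ⟪x, ℓ₀⟫) + ⟪ℓ₀, y⟫ ≤ h y := by
      intro y hy
      have := hcon y hy
      rw [real_inner_comm y ℓ₀]
      linarith
    have hmem : ((c - ⟪x, ℓ₀⟫ + ⟪ℓ₀, x⟫ : ℝ) : EReal) ∈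
        {z : EReal | ∃ (a : ℝ) (b : E),
          (∀ y ∈ Ω, a + ⟪b, y⟫ ≤ h y) ∧ z = ((a + ⟪b, x⟫ : ℝ) : EReal)} :=
      ⟨c - ⟪x, ℓ₀⟫, ℓ₀, hmin, rfl⟩
    have hge := le_sSup hmem
    have hcx : c - ⟪x, ℓ₀⟫ + ⟪ℓ₀, x⟫ = c := by
      rw [real_inner_comm x ℓ₀]; ring
    rw [hcx] at hge
    exact absurd hc (not_lt.2 hge)
  obtain ⟨y₀, hy₀Ω, hy₀lt⟩ := hy₀
  set ε₀ : ℝ := (c - (⟪x, ℓ₀⟫ - ⟪y₀, ℓ₀⟫ + h y₀)) / 4 with hε₀def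
  have hε₀ : 0 < ε₀ := by rw [hε₀def]; linarith
  have hcont : ContinuousAt h y₀ := hh.continuousAt (hΩo.mem_nhds hy₀Ω)
  obtain ⟨δ₁, hδ₁, hδ₁h⟩ := Metric.continuousAt_iff.1 hcont ε₀ hε₀
  obtain ⟨δ₂, hδ₂, hδ₂Ω⟩ := Metric.isOpen_iff.1 hΩo y₀ hy₀Ω
  set δ₀ : ℝ := min (min δ₁ δ₂) (ε₀ / (R + 1)) with hδ₀def
  have hδ₀ : 0 < δ₀ := lt_min (lt_min hδ₁ hδ₂) (div_pos hε₀ (by linarith))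
  have hballΩ : Metric.ball y₀ δ₀ ⊆ Ω :=
    (Metric.ball_subset_ball ((min_le_left _ _).trans (min_le_right _ _))).trans hδ₂Ω
  have hmpos := aux_mass_pos Ω ρ hρint hρsupp y₀ δ₀ hδ₀ hballΩ
  have hmne : (∫⁻ y in Metric.ball y₀ δ₀, ENNReal.ofReal (ρ y)) ≠ ⊤ := by
    refine ne_top_of_le_ne_top ?_ (lintegral_mono_set hballΩ)
    rw [hν1]; exact ENNReal.one_ne_top
  set m₁ : ℝ := (∫⁻ y in Metric.ball y₀ δ₀, ENNReal.ofReal (ρ y)).toReal with hm₁def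
  have hm₁ : 0 < m₁ := ENNReal.toReal_pos hmpos.ne' hmne
  refine ⟨ε₀ / (‖x - y₀‖ + 1), div_pos hε₀ (by positivity), max 1 (|Real.log m₁| / ε₀),
    le_max_left _ _, ?_⟩
  intro r hr ℓ hℓdist hℓR
  have hr1 : (1 : ℝ) ≤ r := le_trans (le_max_left _ _) hr
  have hr0 : (0 : ℝ) < r := by linarith
  set β : ℝ := r * (⟪ℓ, y₀⟫ - δ₀ * ‖ℓ‖ - (h y₀ + ε₀)) with hβdef
  have hpt : ∀ y ∈ Metric.ball y₀ δ₀, β ≤ ⟪r • ℓ, y⟫ - r * h y := by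
    intro y hy
    rw [Metric.mem_ball] at hy
    have hhy : h y ≤ h y₀ + ε₀ := by
      have h1 := hδ₁h (lt_of_lt_of_le hy ((min_le_left _ _).trans (min_le_left _ _)))
      rw [Real.dist_eq] at h1
      have h2 := abs_lt.1 h1
      linarith [h2.2]
    have hinner : ⟪ℓ, y₀⟫ - δ₀ * ‖ℓ‖ ≤ ⟪ℓ, y⟫ := by
      have h1 : ⟪ℓ, y⟫ - ⟪ℓ, y₀⟫ = ⟪ℓ, y - y₀⟫ := by rw [inner_sub_right]
      have h2 : |⟪ℓ, y - y₀⟫| ≤ ‖ℓ‖ * ‖y - y₀‖ := abs_real_inner_le_norm ℓ (y - y₀)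
      have h3 : ‖y - y₀‖ ≤ δ₀ := by rw [← dist_eq_norm]; exact hy.le
      have h5 := neg_abs_le ⟪ℓ, y - y₀⟫
      nlinarith [norm_nonneg ℓ, norm_nonneg (y - y₀)]
    rw [real_inner_smul_left, hβdef]
    nlinarith
  have hψ := aux_psi_ge Ω ρ hρ0 (fun y => r * h y) (r • ℓ) (Metric.ball y₀ δ₀)
    measurableSet_ball hballΩ β m₁ hm₁
    (by rw [hm₁def, ENNReal.ofReal_toReal hmne]) hpt
  have hsub : ((⟪x, r • ℓ⟫ : ℝ) : EReal) - psiTilt Ω ρ (fun y => r * h y) (r • ℓ)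
      ≤ ((⟪x, r • ℓ⟫ - (β + Real.log m₁) : ℝ) : EReal) := by
    rw [EReal.coe_sub]
    exact EReal.sub_le_sub le_rfl hψ
  refine hsub.trans (EReal.coe_le_coe_iff.2 ?_)
  have hx_inner : ⟪x, r • ℓ⟫ = r * ⟪x, ℓ⟫ := real_inner_smul_right x ℓ r
  have hsplit : ⟪x, ℓ⟫ - ⟪ℓ, y₀⟫ = (⟪x, ℓ₀⟫ - ⟪y₀, ℓ₀⟫) + ⟪x - y₀, ℓ - ℓ₀⟫ := by
    have h1 : ⟪x - y₀, ℓ - ℓ₀⟫ = ⟪x, ℓ⟫ - ⟪x, ℓ₀⟫ - ⟪y₀, ℓ⟫ + ⟪y₀, ℓ₀⟫ := by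
      rw [inner_sub_left, inner_sub_right, inner_sub_right]; ring
    have h2 : ⟪ℓ, y₀⟫ = ⟪y₀, ℓ⟫ := real_inner_comm y₀ ℓ
    linarith
  have hcs : ⟪x - y₀, ℓ - ℓ₀⟫ ≤ ε₀ := by
    have h2 : |⟪x - y₀, ℓ - ℓ₀⟫| ≤ ‖x - y₀‖ * ‖ℓ - ℓ₀‖ := abs_real_inner_le_norm _ _
    have h3 : ‖ℓ - ℓ₀‖ < ε₀ / (‖x - y₀‖ + 1) := by rw [← dist_eq_norm]; exact hℓdist
    have h6 : (0:ℝ) < ‖x - y₀‖ + 1 := by positivity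
    have h5 : ‖x - y₀‖ * (ε₀ / (‖x - y₀‖ + 1)) ≤ ε₀ := by
      rw [mul_div_assoc', div_le_iff₀ h6]
      nlinarith [norm_nonneg (x - y₀)]
    nlinarith [le_abs_self ⟪x - y₀, ℓ - ℓ₀⟫, norm_nonneg (x - y₀), norm_nonneg (ℓ - ℓ₀)]
  have hδℓ : δ₀ * ‖ℓ‖ ≤ ε₀ := by
    have h1 : δ₀ ≤ ε₀ / (R + 1) := min_le_right _ _
    have h2 : (0:ℝ) < R + 1 := by linarith
    have h3 : ε₀ / (R + 1) * R ≤ ε₀ := by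
      rw [div_mul_eq_mul_div, div_le_iff₀ h2]
      nlinarith
    have h4 : δ₀ * ‖ℓ‖ ≤ ε₀ / (R + 1) * ‖ℓ‖ := mul_le_mul_of_nonneg_right h1 (norm_nonneg ℓ)
    have h5 : ε₀ / (R + 1) * ‖ℓ‖ ≤ ε₀ / (R + 1) * R :=
      mul_le_mul_of_nonneg_left hℓR (le_of_lt (div_pos hε₀ h2))
    linarith
  have hlog : -Real.log m₁ ≤ r * ε₀ := by
    have h7 : |Real.log m₁| / ε₀ ≤ r := le_trans (le_max_right _ _) hr
    rw [div_le_iff₀ hε₀] at h7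
    have := neg_abs_le (Real.log m₁)
    linarith
  have hgap : ⟪x, ℓ₀⟫ - ⟪y₀, ℓ₀⟫ + h y₀ = c - 4 * ε₀ := by rw [hε₀def]; ring
  have key : ⟪x, ℓ⟫ - (⟪ℓ, y₀⟫ - δ₀ * ‖ℓ‖ - (h y₀ + ε₀)) ≤ c - ε₀ := by linarith
  have hmul := mul_le_mul_of_nonneg_left key hr0.le
  have e1 : r * (⟪x, ℓ⟫ - (⟪ℓ, y₀⟫ - δ₀ * ‖ℓ‖ - (h y₀ + ε₀)))
      = r * ⟪x, ℓ⟫ - r * (⟪ℓ, y₀⟫ - δ₀ * ‖ℓ‖ - (h y₀ + ε₀)) := by ring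
  have e2 : r * (c - ε₀) = r * c - r * ε₀ := by ring
  rw [hx_inner, hβdef]
  linarith

set_option maxHeartbeats 1000000 in
lemma aux_capmass (Ω : Set E) (ρ : E → ℝ) (hρint : Integrable ρ)
    (hρsupp : ∀ᵐ y, (y ∈ Ω → 0 < ρ y) ∧ (y ∉ Ω → ρ y = 0))
    (hν1 : (∫⁻ y in Ω, ENNReal.ofReal (ρ y)) = 1)
    (t : Finset E) (htne : t.Nonempty) (δ : ℝ) (hδ : 0 < δ)
    (hball : ∀ f ∈ t, Metric.closedBall f (3 * δ) ⊆ Ω) :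
    ∃ m₀ > 0, ∀ f ∈ t, ∀ u : E, ‖u‖ = 1 →
      ENNReal.ofReal m₀ ≤
        ∫⁻ y in Metric.ball (f + ((5 / 2) * δ) • u) (δ / 2), ENNReal.ofReal (ρ y) := by
  by_cases hsph : ∃ u : E, ‖u‖ = 1
  · obtain ⟨u₁, hu₁⟩ := hsph
    have hu₁s : u₁ ∈ Metric.sphere (0 : E) 1 := by
      rwa [mem_sphere_zero_iff_norm]
    have hcomp : IsCompact (Metric.sphere (0 : E) 1) := isCompact_sphere 0 1
    have hcover : Metric.sphere (0 : E) 1 ⊆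
        ⋃ v : Metric.sphere (0 : E) 1, Metric.ball (v : E) (1 / 20) := by
      intro u hu
      exact Set.mem_iUnion.2 ⟨⟨u, hu⟩, Metric.mem_ball_self (by norm_num)⟩
    obtain ⟨s', hs'⟩ := hcomp.elim_finite_subcover _ (fun _ => Metric.isOpen_ball) hcover
    have hs'ne : s'.Nonempty := by
      rcases Set.mem_iUnion₂.1 (hs' hu₁s) with ⟨v, hv, _⟩
      exact ⟨v, hv⟩
    -- mass of each small ball
    have hsubΩ : ∀ f ∈ t, ∀ v : Metric.sphere (0 : E) 1,
        Metric.ball (f + ((5 / 2) * δ) • (v : E)) (δ / 4) ⊆ Ω := by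
      intro f hf v
      refine Set.Subset.trans ?_ (hball f hf)
      intro y hy
      rw [Metric.mem_ball] at hy
      rw [Metric.mem_closedBall]
      have hvn : ‖(v : E)‖ = 1 := by
        have := v.2
        rwa [mem_sphere_zero_iff_norm] at this
      have h1 : dist y f ≤ dist y (f + ((5 / 2) * δ) • (v : E))
          + dist (f + ((5 / 2) * δ) • (v : E)) f := dist_triangle _ _ _
      have h2 : dist (f + ((5 / 2) * δ) • (v : E)) f = (5 / 2) * δ := by
        rw [dist_eq_norm]
        have : f + ((5 / 2) * δ) • (v : E) - f = ((5 / 2) * δ) • (v : E) := by abel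
        rw [this, norm_smul, hvn, Real.norm_eq_abs, abs_of_pos (by positivity : (0:ℝ) < 5 / 2 * δ), mul_one]
      linarith
    set M : E → Metric.sphere (0 : E) 1 → ℝ≥0∞ :=
      fun f v => ∫⁻ y in Metric.ball (f + ((5 / 2) * δ) • (v : E)) (δ / 4), ENNReal.ofReal (ρ y)
      with hMdef
    have hMpos : ∀ f ∈ t, ∀ v ∈ s', 0 < M f v := by
      intro f hf v _
      exact aux_mass_pos Ω ρ hρint hρsupp _ _ (by positivity) (hsubΩ f hf v)
    have hMne : ∀ f ∈ t, ∀ v ∈ s', M f v ≠ ⊤ := by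
      intro f hf v _
      refine ne_top_of_le_ne_top ?_ (lintegral_mono_set (hsubΩ f hf v))
      rw [hν1]; exact ENNReal.one_ne_top
    obtain ⟨p₀, hp₀mem, hp₀min⟩ := Finset.exists_min_image (t ×ˢ s')
      (fun p => (M p.1 p.2).toReal) (htne.product hs'ne)
    set m₀ : ℝ := (M p₀.1 p₀.2).toReal with hm₀def
    have hm₀pos : 0 < m₀ := by
      rw [Finset.mem_product] at hp₀mem
      exact ENNReal.toReal_pos (hMpos _ hp₀mem.1 _ hp₀mem.2).ne' (hMne _ hp₀mem.1 _ hp₀mem.2)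
    refine ⟨m₀, hm₀pos, ?_⟩
    intro f hf u hu
    have hus : u ∈ Metric.sphere (0 : E) 1 := by rwa [mem_sphere_zero_iff_norm]
    rcases Set.mem_iUnion₂.1 (hs' hus) with ⟨v, hvs, hv⟩
    rw [Metric.mem_ball] at hv
    have hsubball : Metric.ball (f + ((5 / 2) * δ) • (v : E)) (δ / 4)
        ⊆ Metric.ball (f + ((5 / 2) * δ) • u) (δ / 2) := by
      intro y hy
      rw [Metric.mem_ball] at hy ⊢
      have h1 : dist y (f + ((5 / 2) * δ) • u) ≤ dist y (f + ((5 / 2) * δ) • (v : E))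
          + dist (f + ((5 / 2) * δ) • (v : E)) (f + ((5 / 2) * δ) • u) := dist_triangle _ _ _
      have h2 : dist (f + ((5 / 2) * δ) • (v : E)) (f + ((5 / 2) * δ) • u)
          = (5 / 2) * δ * dist (v : E) u := by
        rw [dist_eq_norm, dist_eq_norm]
        have : f + ((5 / 2) * δ) • (v : E) - (f + ((5 / 2) * δ) • u)
            = ((5 / 2) * δ) • ((v : E) - u) := by
          rw [smul_sub]; abel
        rw [this, norm_smul, Real.norm_eq_abs, abs_of_pos (by positivity : (0:ℝ) < 5 / 2 * δ)]
      have h3 : dist (v : E) u < 1 / 20 := by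
        rw [dist_comm] at hv; exact hv
      have h5 : dist (f + ((5 / 2) * δ) • (v : E)) (f + ((5 / 2) * δ) • u) ≤ δ / 8 := by
        rw [h2]
        have h6 := mul_le_mul_of_nonneg_left h3.le (by positivity : (0:ℝ) ≤ 5 / 2 * δ)
        linarith
      linarith
    have h4' : m₀ ≤ (M f v).toReal :=
      hp₀min (f, v) (Finset.mem_product.2 ⟨hf, hvs⟩)
    have h4 : ENNReal.ofReal m₀ ≤ M f v := ENNReal.ofReal_le_of_le_toReal h4'
    exact h4.trans (lintegral_mono_set hsubball)
  · exact ⟨1, one_pos, fun f _ u hu => absurd ⟨u, hu⟩ hsph⟩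

set_option maxHeartbeats 1000000 in
lemma aux_phi_le (Ω : Set E) (hΩo : IsOpen Ω)
    (h : E → ℝ) (hh : ContinuousOn h Ω)
    (ρ : E → ℝ) (hρ0 : ∀ y, 0 ≤ ρ y) (hρint : Integrable ρ)
    (hρsupp : ∀ᵐ y, (y ∈ Ω → 0 < ρ y) ∧ (y ∉ Ω → ρ y = 0))
    (hν1 : (∫⁻ y in Ω, ENNReal.ofReal (ρ y)) = 1)
    (x : E) (hx : x ∈ convexHull ℝ Ω) (c : ℝ) (hc : convEnv Ω h x < ((c : ℝ) : EReal)) :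
    ∃ r₁ : ℝ, 1 ≤ r₁ ∧ ∀ r, r₁ ≤ r →
      phiTilt Ω ρ (fun y => r * h y) x ≤ ((r * c : ℝ) : EReal) := by
  -- finite representation
  rw [convexHull_eq_union_convexHull_finite_subsets] at hx
  obtain ⟨t, htsub, hxt⟩ := Set.mem_iUnion₂.1 hx
  have htne : t.Nonempty := by
    rcases Finset.eq_empty_or_nonempty t with rfl | hne
    · simp at hxt
    · exact hne
  -- radius δ
  have hδex : ∀ f ∈ t, ∃ ε > 0, Metric.ball f ε ⊆ Ω := fun f hf =>
    Metric.isOpen_iff.1 hΩo f (htsub hf)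
  choose! ε hε0 hεΩ using hδex
  set δ : ℝ := t.inf' htne ε / 4 with hδdef
  have hinfpos : 0 < t.inf' htne ε := by
    rw [Finset.lt_inf'_iff]; exact hε0
  have hδ : 0 < δ := by rw [hδdef]; linarith
  have hball3 : ∀ f ∈ t, Metric.closedBall f (3 * δ) ⊆ Ω := by
    intro f hf
    refine Set.Subset.trans (Metric.closedBall_subset_ball ?_) (hεΩ f hf)
    have := Finset.inf'_le ε hf
    rw [hδdef]; linarith
  -- bound M for h on the union of closed balls
  have hKex : ∃ M : ℝ, ∀ f ∈ t, ∀ y ∈ Metric.closedBall f (3 * δ), h y ≤ M := by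
    have hK : IsCompact (⋃ f ∈ t, Metric.closedBall f (3 * δ)) :=
      t.finite_toSet.isCompact_biUnion (fun f _ => isCompact_closedBall f _)
    have hKΩ : (⋃ f ∈ t, Metric.closedBall f (3 * δ)) ⊆ Ω := by
      intro y hy
      rcases Set.mem_iUnion₂.1 hy with ⟨f, hf, hyf⟩
      exact hball3 f hf hyf
    have hbdd : BddAbove (h '' (⋃ f ∈ t, Metric.closedBall f (3 * δ))) :=
      (hK.image_of_continuousOn (hh.mono hKΩ)).bddAbove
    obtain ⟨M, hM⟩ := hbdd
    exact ⟨M, fun f hf y hy => hM (Set.mem_image_of_mem h (Set.mem_iUnion₂.2 ⟨f, hf, hy⟩))⟩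
  obtain ⟨M, hM⟩ := hKex
  -- uniform cap mass
  obtain ⟨m₀, hm₀, hcap⟩ := aux_capmass Ω ρ hρint hρsupp hν1 t htne δ hδ hball3
  -- the radius R
  set R : ℝ := max 1 ((M + |c| + 1) / (2 * δ)) with hRdef
  have hR : 0 < R := lt_of_lt_of_le one_pos (le_max_left _ _)
  have hR2 : M + |c| + 1 ≤ 2 * δ * R := by
    have h1 : (M + |c| + 1) / (2 * δ) ≤ R := le_max_right _ _
    have h2 : (0:ℝ) < 2 * δ := by linarith
    rw [div_le_iff₀ h2] at h1
    linarith
  -- local estimates and compactness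
  have hloc := fun ℓ₀ => aux_local Ω hΩo h hh ρ hρ0 hρint hρsupp hν1 x c R hR hc ℓ₀
  choose ρ₀ hρ₀pos r₂ hr₂1 hP using hloc
  have hcov : Metric.closedBall (0 : E) R ⊆ ⋃ ℓ₀ : E, Metric.ball ℓ₀ (ρ₀ ℓ₀) := by
    intro ℓ _
    exact Set.mem_iUnion.2 ⟨ℓ, Metric.mem_ball_self (hρ₀pos ℓ)⟩
  obtain ⟨s, hs⟩ := (isCompact_closedBall (0 : E) R).elim_finite_subcover
    (fun ℓ₀ => Metric.ball ℓ₀ (ρ₀ ℓ₀)) (fun _ => Metric.isOpen_ball) hcov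
  have hsne : s.Nonempty := by
    have h0 : (0 : E) ∈ Metric.closedBall (0 : E) R := Metric.mem_closedBall_self hR.le
    rcases Set.mem_iUnion₂.1 (hs h0) with ⟨ℓ₀, hℓ₀, _⟩
    exact ⟨ℓ₀, hℓ₀⟩
  refine ⟨max (max 1 (-Real.log m₀)) (s.sup' hsne r₂),
    le_trans (le_max_left _ _) (le_max_left _ _), ?_⟩
  intro r hr
  have hr1 : (1:ℝ) ≤ r := le_trans (le_trans (le_max_left _ _) (le_max_left _ _)) hr
  have hr0 : (0:ℝ) < r := by linarith
  have hrlog : -Real.log m₀ ≤ r :=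
    le_trans (le_trans (le_max_right _ _) (le_max_left _ _)) hr
  refine iSup_le fun k => ?_
  by_cases hk : ‖k‖ ≤ r * R
  · -- compact regime
    set ℓ : E := r⁻¹ • k with hℓdef
    have hℓnorm : ‖ℓ‖ ≤ R := by
      rw [hℓdef, norm_smul, norm_inv, Real.norm_eq_abs, abs_of_pos hr0]
      rw [inv_mul_le_iff₀ hr0]
      linarith
    have hℓcB : ℓ ∈ Metric.closedBall (0 : E) R := by
      rw [Metric.mem_closedBall, dist_zero_right]
      exact hℓnorm
    rcases Set.mem_iUnion₂.1 (hs hℓcB) with ⟨ℓ₀, hℓ₀s, hmem⟩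
    rw [Metric.mem_ball] at hmem
    have hr₂ : r₂ ℓ₀ ≤ r :=
      le_trans (le_trans (Finset.le_sup' r₂ hℓ₀s) (le_max_right _ _)) hr
    have := hP ℓ₀ r hr₂ ℓ hmem hℓnorm
    rwa [smul_inv_smul₀ hr0.ne' k] at this
  · -- large-k regime
    push_neg at hk
    have hk0 : k ≠ 0 := by
      intro h0
      rw [h0, norm_zero] at hk
      nlinarith
    set u : E := ‖k‖⁻¹ • k with hudef
    have hu : ‖u‖ = 1 := norm_smul_inv_norm hk0
    obtain ⟨f, hft, hfmax⟩ := aux_inner_le_max t htne x hxt k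
    set A : Set E := Metric.ball (f + ((5 / 2) * δ) • u) (δ / 2) with hAdef
    have hAcb : A ⊆ Metric.closedBall f (3 * δ) := by
      intro y hy
      rw [hAdef, Metric.mem_ball] at hy
      rw [Metric.mem_closedBall]
      have h1 : dist y f ≤ dist y (f + ((5 / 2) * δ) • u)
          + dist (f + ((5 / 2) * δ) • u) f := dist_triangle _ _ _
      have h2 : dist (f + ((5 / 2) * δ) • u) f = (5 / 2) * δ := by
        rw [dist_eq_norm]
        have he : f + ((5 / 2) * δ) • u - f = ((5 / 2) * δ) • u := by abel
        rw [he, norm_smul, hu, Real.norm_eq_abs,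
          abs_of_pos (by positivity : (0:ℝ) < 5 / 2 * δ), mul_one]
      linarith
    have hAΩ : A ⊆ Ω := hAcb.trans (hball3 f hft)
    set β : ℝ := ⟪k, f⟫ + 2 * δ * ‖k‖ - r * M with hβdef
    have hpt : ∀ y ∈ A, β ≤ ⟪k, y⟫ - r * h y := by
      intro y hy
      have hyh : h y ≤ M := hM f hft y (hAcb hy)
      have hinner : ⟪k, f⟫ + 2 * δ * ‖k‖ ≤ ⟪k, y⟫ := by
        have hdecomp : y = f + ((5 / 2) * δ) • u + (y - (f + ((5 / 2) * δ) • u)) := by abel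
        have hku : ⟪k, u⟫ = ‖k‖ := by
          rw [hudef, real_inner_smul_right, real_inner_self_eq_norm_mul_norm]
          field_simp
        have hw : ‖y - (f + ((5 / 2) * δ) • u)‖ ≤ δ / 2 := by
          rw [hAdef, Metric.mem_ball, dist_eq_norm] at hy
          exact hy.le
        have hkw : -(‖k‖ * (δ / 2)) ≤ ⟪k, y - (f + ((5 / 2) * δ) • u)⟫ := by
          have h2 := abs_real_inner_le_norm k (y - (f + ((5 / 2) * δ) • u))
          have h3 := neg_abs_le ⟪k, y - (f + ((5 / 2) * δ) • u)⟫
          nlinarith [norm_nonneg k]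
        have hsplit : ⟪k, y⟫ = ⟪k, f⟫ + (5 / 2) * δ * ‖k‖
            + ⟪k, y - (f + ((5 / 2) * δ) • u)⟫ := by
          conv_lhs => rw [hdecomp]
          rw [inner_add_right, inner_add_right, real_inner_smul_right, hku]
        nlinarith [norm_nonneg k, hδ]
      have hrh : r * h y ≤ r * M := mul_le_mul_of_nonneg_left hyh hr0.le
      rw [hβdef]
      linarith
    have hψ := aux_psi_ge Ω ρ hρ0 (fun y => r * h y) k A measurableSet_ball hAΩ β m₀ hm₀
      (hcap f hft u hu) hpt
    have hsub : ((⟪x, k⟫ : ℝ) : EReal) - psiTilt Ω ρ (fun y => r * h y) k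
        ≤ ((⟪x, k⟫ - (β + Real.log m₀) : ℝ) : EReal) := by
      rw [EReal.coe_sub]
      exact EReal.sub_le_sub le_rfl hψ
    refine hsub.trans (EReal.coe_le_coe_iff.2 ?_)
    have hxf : ⟪x, k⟫ ≤ ⟪k, f⟫ := by
      rw [real_inner_comm f k]; exact hfmax
    have h2δ : 2 * δ * (r * R) ≤ 2 * δ * ‖k‖ :=
      mul_le_mul_of_nonneg_left hk.le (by linarith)
    have h2δR : r * (M + |c| + 1) ≤ r * (2 * δ * R) :=
      mul_le_mul_of_nonneg_left hR2 hr0.le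
    have habs : -(r * |c|) ≤ r * c := by
      have := neg_abs_le c
      nlinarith
    rw [hβdef]
    have e3 : r * (2 * δ * R) = 2 * δ * (r * R) := by ring
    have e4 : r * (M + |c| + 1) = r * M + r * |c| + r := by ring
    linarith

lemma aux_part2 (Ω : Set E) (hΩo : IsOpen Ω) (h : E → ℝ) :
    (∀ x ∈ convexHull ℝ Ω, convEnv Ω h x = ⊥) ∨
      (∃ g : E → ℝ, ContinuousOn g (convexHull ℝ Ω) ∧
        ∀ x ∈ convexHull ℝ Ω, convEnv Ω h x = ((g x : ℝ) : EReal)) := by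
  by_cases hS : ∃ a : ℝ, ∃ b : E, ∀ y ∈ Ω, a + ⟪b, y⟫ ≤ h y
  · right
    obtain ⟨a₀, b₀, hab₀⟩ := hS
    set realSet : E → Set ℝ := fun x =>
      {v : ℝ | ∃ a : ℝ, ∃ b : E, (∀ y ∈ Ω, a + ⟪b, y⟫ ≤ h y) ∧ v = a + ⟪b, x⟫} with hrsdef
    have hne : ∀ x : E, (realSet x).Nonempty :=
      fun x => ⟨a₀ + ⟪b₀, x⟫, a₀, b₀, hab₀, rfl⟩
    have hbdd : ∀ x ∈ convexHull ℝ Ω, BddAbove (realSet x) := by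
      intro x hx
      rw [convexHull_eq] at hx
      obtain ⟨ι, t, w, z, hw0, hw1, hz, hcm⟩ := hx
      refine ⟨∑ i ∈ t, w i * h (z i), ?_⟩
      rintro v ⟨a, b, hab, rfl⟩
      have hx_eq : x = ∑ i ∈ t, w i • z i := by
        rw [← hcm, Finset.centerMass_eq_of_sum_1 _ _ hw1]
      have hinner : ⟪b, x⟫ = ∑ i ∈ t, w i * ⟪b, z i⟫ := by
        rw [hx_eq, inner_sum]
        exact Finset.sum_congr rfl fun i _ => real_inner_smul_right b (z i) (w i)
      have hsum : a + ⟪b, x⟫ = ∑ i ∈ t, w i * (a + ⟪b, z i⟫) := by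
        rw [hinner, Finset.sum_congr rfl (fun i _ => mul_add (w i) a ⟪b, z i⟫),
          Finset.sum_add_distrib, ← Finset.sum_mul, hw1, one_mul]
      rw [hsum]
      refine Finset.sum_le_sum fun i hi => ?_
      exact mul_le_mul_of_nonneg_left (hab (z i) (hz i hi)) (hw0 i hi)
    set g : E → ℝ := fun x => sSup (realSet x) with hgdef
    have hg_eq : ∀ x ∈ convexHull ℝ Ω, convEnv Ω h x = ((g x : ℝ) : EReal) := by
      intro x hx
      have himg : {z : EReal | ∃ (a : ℝ) (b : E),
          (∀ y ∈ Ω, a + ⟪b, y⟫ ≤ h y) ∧ z = ((a + ⟪b, x⟫ : ℝ) : EReal)}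
          = (fun t : ℝ => (t : EReal)) '' realSet x := by
        ext z
        constructor
        · rintro ⟨a, b, hab, rfl⟩
          exact ⟨a + ⟪b, x⟫, ⟨a, b, hab, rfl⟩, rfl⟩
        · rintro ⟨v, ⟨a, b, hab, rfl⟩, rfl⟩
          exact ⟨a, b, hab, rfl⟩
      rw [convEnv, himg, aux_coe_sSup _ (hne x) (hbdd x hx)]
    have hconv : ConvexOn ℝ (convexHull ℝ Ω) g := by
      refine ⟨convex_convexHull ℝ Ω, ?_⟩
      intro p hp q hq s u hs hu hsu
      refine csSup_le (hne _) ?_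
      rintro v ⟨a, b, hab, rfl⟩
      have hv : a + ⟪b, s • p + u • q⟫ = s * (a + ⟪b, p⟫) + u * (a + ⟪b, q⟫) := by
        rw [inner_add_right, real_inner_smul_right, real_inner_smul_right]
        have : a = s * a + u * a := by rw [← add_mul, hsu, one_mul]
        linarith [this]
      rw [hv]
      have h1 : a + ⟪b, p⟫ ≤ g p := le_csSup (hbdd p hp) ⟨a, b, hab, rfl⟩
      have h2 : a + ⟪b, q⟫ ≤ g q := le_csSup (hbdd q hq) ⟨a, b, hab, rfl⟩
      have h3 := mul_le_mul_of_nonneg_left h1 hs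
      have h4 := mul_le_mul_of_nonneg_left h2 hu
      simp only [smul_eq_mul]
      linarith
    exact ⟨g, hconv.continuousOn (aux_isOpen_convexHull Ω hΩo), hg_eq⟩
  · left
    intro x _
    have hempty : {z : EReal | ∃ (a : ℝ) (b : E),
        (∀ y ∈ Ω, a + ⟪b, y⟫ ≤ h y) ∧ z = ((a + ⟪b, x⟫ : ℝ) : EReal)} = ∅ := by
      rw [Set.eq_empty_iff_forall_notMem]
      rintro z ⟨a, b, hab, _⟩
      exact hS ⟨a, b, hab⟩
    rw [convEnv, hempty, sSup_empty]

/-- Proposition 2, part 2. On the convex hull of `Ω`,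
`(1/r) φ_{rh} → conv_Ω(h)` as `r → ∞`, and `conv_Ω(h)` is either identically `−∞`
there or real-valued and continuous there. -/
theorem rescaled_phiTilt_tendsto_convEnv (n : ℕ)
    (Ω : Set (EuclideanSpace ℝ (Fin n))) (hΩo : IsOpen Ω) (hΩne : Ω.Nonempty)
    (h : EuclideanSpace ℝ (Fin n) → ℝ) (hh : ContinuousOn h Ω)
    (ρ : EuclideanSpace ℝ (Fin n) → ℝ) (hρ0 : ∀ y, 0 ≤ ρ y)
    (hρint : Integrable ρ) (hρ1 : (∫ y, ρ y) = 1)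
    (hρsupp : ∀ᵐ y, (y ∈ Ω → 0 < ρ y) ∧ (y ∉ Ω → ρ y = 0)) :
    (∀ x ∈ convexHull ℝ Ω,
      Tendsto (fun r : ℝ => (((1 : ℝ) / r : ℝ) : EReal) *
          phiTilt Ω ρ (fun y => r * h y) x)
        atTop (𝓝 (convEnv Ω h x))) ∧
    ((∀ x ∈ convexHull ℝ Ω, convEnv Ω h x = ⊥) ∨
      (∃ g : EuclideanSpace ℝ (Fin n) → ℝ,
        ContinuousOn g (convexHull ℝ Ω) ∧
        ∀ x ∈ convexHull ℝ Ω, convEnv Ω h x = ((g x : ℝ) : EReal))) := by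
  have hΩm : MeasurableSet Ω := hΩo.measurableSet
  have hν1 := aux_nu_one Ω hΩm ρ hρ0 hρint hρ1 hρsupp
  constructor
  · intro x hx
    have hlow : ∀ r : ℝ, 0 < r →
        convEnv Ω h x ≤ (((1 : ℝ) / r : ℝ) : EReal) * phiTilt Ω ρ (fun y => r * h y) x := by
      intro r hr
      rw [convEnv]
      refine sSup_le ?_
      rintro z ⟨a, b, hab, rfl⟩
      have hphi := aux_phi_ge Ω hΩm ρ hρ0 hν1 h a b hab x r hr
      have hnn : (0 : EReal) ≤ (((1 : ℝ) / r : ℝ) : EReal) := by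
        have : (0:ℝ) ≤ 1 / r := by positivity
        exact_mod_cast this
      have hmul := mul_le_mul_of_nonneg_left hphi hnn
      calc ((a + ⟪b, x⟫ : ℝ) : EReal)
          = (((1 / r) * (r * (a + ⟪b, x⟫)) : ℝ) : EReal) := by
            congr 1
            field_simp
        _ = (((1:ℝ) / r : ℝ) : EReal) * ((r * (a + ⟪b, x⟫) : ℝ) : EReal) := EReal.coe_mul _ _
        _ ≤ _ := hmul
    have hupp : ∀ c : ℝ, convEnv Ω h x < (c : EReal) →
        ∀ᶠ r in atTop, (((1 : ℝ) / r : ℝ) : EReal) *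
          phiTilt Ω ρ (fun y => r * h y) x ≤ (c : EReal) := by
      intro c hc
      obtain ⟨r₁, hr₁1, hr₁⟩ := aux_phi_le Ω hΩo h hh ρ hρ0 hρint hρsupp hν1 x hx c hc
      filter_upwards [eventually_ge_atTop r₁] with r hr
      have hr1 : (1:ℝ) ≤ r := hr₁1.trans hr
      have hr0 : (0:ℝ) < r := lt_of_lt_of_le one_pos hr1
      have hnn : (0 : EReal) ≤ (((1 : ℝ) / r : ℝ) : EReal) := by
        have : (0:ℝ) ≤ 1 / r := by positivity
        exact_mod_cast this
      have hmul := mul_le_mul_of_nonneg_left (hr₁ r hr) hnn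
      calc (((1 : ℝ) / r : ℝ) : EReal) * phiTilt Ω ρ (fun y => r * h y) x
          ≤ (((1:ℝ) / r : ℝ) : EReal) * ((r * c : ℝ) : EReal) := hmul
        _ = (((1 / r) * (r * c) : ℝ) : EReal) := (EReal.coe_mul _ _).symm
        _ = (c : EReal) := by
            congr 1
            field_simp
    refine tendsto_order.2 ⟨?_, ?_⟩
    · intro a ha
      filter_upwards [eventually_gt_atTop (0:ℝ)] with r hr
      exact lt_of_lt_of_le ha (hlow r hr)
    · intro zc hzc
      obtain ⟨z, hz1, hz2⟩ := exists_between hzc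
      have hzt : z ≠ ⊤ := hz2.ne_top
      have hzb : z ≠ ⊥ := by
        intro h0
        rw [h0] at hz1
        exact not_lt_bot hz1
      have hz1' : convEnv Ω h x < ((z.toReal : ℝ) : EReal) := by
        rwa [EReal.coe_toReal hzt hzb]
      filter_upwards [hupp z.toReal hz1'] with r hrle
      refine lt_of_le_of_lt hrle ?_
      rwa [EReal.coe_toReal hzt hzb]
  · exact aux_part2 Ω hΩo h
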